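/- For every nonnegative integer n, ∫_0^1 log Γ(x) sin((2n+1)πx) dx = (1/((2n+1)π)) [log(π/2) + 1/(2n+1) + 2 ∑_{k=1}^{n} 1/(2k-1)]. -/

import Mathlib

/-!
Replacing `x` by `1 - x` fixes `sin ((2n+1)πx)`, so twice the integral is the integral of
`(log Γ(x) + log Γ(1 - x)) sin ((2n+1)πx)`, which Euler's reflection formula turns into
`(log π - log sin (πx)) sin ((2n+1)πx)`. The integrand `log sin (πx) sin ((2n+1)πx)` is again
symmetric about `1/2`, and on `(0, 1/2]` it has an explicit primitive: integrate by parts against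
`1 - cos ((2n+1)πx)` and simplify `(1 - cos ((2n+1)u)) cot u` with the telescoping identity
`1 - cos (2nu) = 2 sin u ∑_{j=1}^n sin ((2j-1)u)`. The boundary term
`(1 - cos ((2n+1)πx)) log sin (πx)` vanishes at `0` because `1 - cos = O(x²)`.
-/

open Real Finset intervalIntegral Filter Topology
open MeasureTheory (volume)

lemma sin_odd_mul_pi_mul_one_sub (n : ℕ) (x : ℝ) :
    sin ((2 * n + 1) * π * (1 - x)) = sin ((2 * n + 1) * π * x) := by
  have := sin_nat_mul_pi_sub ((2 * n + 1) * π * x) (2 * n + 1)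
  push_cast at this
  rw [mul_one_sub, this, pow_succ, pow_mul]
  norm_num

lemma sin_nat_mul_eq_zero_of_sin_eq_zero {y : ℝ} (hy : sin y = 0) (m : ℕ) : sin (m * y) = 0 := by
  obtain ⟨k, rfl⟩ := sin_eq_zero_iff.1 hy
  rw [← mul_assoc]
  exact_mod_cast sin_int_mul_pi (m * k)

lemma one_sub_cos_two_mul_nat_mul (n : ℕ) (u : ℝ) :
    1 - cos (2 * n * u) = 2 * sin u * ∑ j ∈ Icc 1 n, sin ((2 * j - 1) * u) := by
  induction n with
  | zero => simp
  | succ n ih =>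
    rw [sum_Icc_succ_top (by omega), mul_add, ← ih]
    have := cos_sub_cos (2 * n * u) (2 * (n + 1) * u)
    rw [show (2 * n * u - 2 * (n + 1) * u) / 2 = -u by ring, sin_neg] at this
    push_cast
    rw [show (2 * ((n : ℝ) + 1) - 1) * u = (2 * n * u + 2 * (n + 1) * u) / 2 by ring]
    linear_combination this

lemma one_sub_cos_odd_mul_mul_cot_add_sin_div_one_add_cos (n : ℕ) {u : ℝ} (hs : sin u ≠ 0)
    (hc : 1 + cos u ≠ 0) :
    (1 - cos ((2 * n + 1) * u)) * (cos u / sin u) + sin u / (1 + cos u) =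
      sin ((2 * n + 1) * u) + 2 * ∑ j ∈ Icc 1 n, sin ((2 * j - 1) * u) := by
  have hsum := one_sub_cos_two_mul_nat_mul n u
  have hcos : cos ((2 * n + 1) * u) = cos (2 * n * u) * cos u - sin (2 * n * u) * sin u := by
    rw [add_mul, one_mul, cos_add]
  have hsin : sin ((2 * n + 1) * u) = sin (2 * n * u) * cos u + cos (2 * n * u) * sin u := by
    rw [add_mul, one_mul, sin_add]
  rw [hcos, hsin]
  generalize ∑ j ∈ Icc 1 n, sin ((2 * j - 1) * u) = S at hsum ⊢
  field_simp
  linear_combination (1 + cos u) * hsum + (1 - (1 + cos u) * cos (2 * n * u)) * sin_sq_add_cos_sq u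

lemma two_mul_integral_mul_eq_integral_add_reflect {a : ℝ} {f s : ℝ → ℝ}
    (hs : ∀ x, s (a - x) = s x) (hfs : IntervalIntegrable (fun x => f x * s x) volume 0 a) :
    2 * ∫ x in 0..a, f x * s x = ∫ x in 0..a, (f x + f (a - x)) * s x := by
  have hreflect : ∫ x in 0..a, f (a - x) * s x = ∫ x in 0..a, f x * s x := by
    simpa [hs] using integral_comp_sub_left (fun x => f x * s x) a (a := 0) (b := a)
  have hint : IntervalIntegrable (fun x => f (a - x) * s x) volume 0 a := by
    simpa [hs] using (hfs.comp_sub_left a).symm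
  simp only [add_mul]
  rw [integral_add hfs hint, hreflect]
  ring

lemma integral_eq_two_mul_integral_half_of_reflect {a : ℝ} {g : ℝ → ℝ}
    (hg : ∀ x, g (a - x) = g x) (hint : IntervalIntegrable g volume 0 a) :
    ∫ x in 0..a, g x = 2 * ∫ x in 0..a / 2, g x := by
  have hsub {b c : ℝ} (hb : b ∈ Set.uIcc 0 a) (hc : c ∈ Set.uIcc 0 a) :
      IntervalIntegrable g volume b c :=
    hint.mono_set (Set.uIcc_subset_uIcc hb hc)
  have hmid : a / 2 ∈ Set.uIcc 0 a := by
    rcases le_total 0 a with h | h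
    · rw [Set.uIcc_of_le h]; constructor <;> linarith
    · rw [Set.uIcc_of_ge h]; constructor <;> linarith
  have hreflect : ∫ x in a / 2..a, g x = ∫ x in 0..a / 2, g x := by
    have := integral_comp_sub_left g a (a := a / 2) (b := a)
    simp only [hg, sub_self] at this
    rw [this, show a - a / 2 = a / 2 by ring]
  rw [← integral_add_adjacent_intervals (hsub Set.left_mem_uIcc hmid)
    (hsub hmid Set.right_mem_uIcc), hreflect]
  ring

lemma two_mul_le_sin_pi_mul {x : ℝ} (hx0 : 0 ≤ x) (hx : x ≤ 1 / 2) : 2 * x ≤ sin (π * x) :=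
  calc 2 * x = 2 / π * (π * x) := by field_simp
    _ ≤ sin (π * x) := mul_le_sin (by positivity) (by nlinarith [pi_pos])

lemma tendsto_one_sub_cos_mul_log_sin_pi_mul (c : ℝ) :
    Tendsto (fun x => (1 - cos (c * x)) * log (sin (π * x))) (𝓝[>] 0) (𝓝 0) := by
  have hbound : Tendsto (fun x : ℝ => -(c ^ 2 / 2) * (x * (x * log x))) (𝓝[>] 0) (𝓝 0) := by
    have hcont : Continuous fun x : ℝ => -(c ^ 2 / 2) * (x * (x * log x)) := by fun_prop
    simpa using hcont.continuousAt.tendsto.mono_left (nhdsWithin_le_nhds (a := (0 : ℝ)))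
  refine squeeze_zero_norm' ?_ hbound
  filter_upwards [Ioo_mem_nhdsGT (by norm_num : (0 : ℝ) < 1 / 2)] with x ⟨hx0, hx⟩
  have hsin := two_mul_le_sin_pi_mul hx0.le hx.le
  have hlog : log x ≤ log (sin (π * x)) := log_le_log hx0 (by linarith)
  have hlog_nonpos : log (sin (π * x)) ≤ 0 := log_nonpos (by linarith) (sin_le_one _)
  have hcos : 1 - (c * x) ^ 2 / 2 ≤ cos (c * x) := one_sub_sq_div_two_le_cos
  rw [norm_mul, Real.norm_of_nonneg (by linarith [cos_le_one (c * x)]),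
    Real.norm_of_nonpos hlog_nonpos]
  nlinarith [cos_le_one (c * x)]

lemma intervalIntegrable_log_sin_pi_mul_mul (g : ℝ → ℝ) (hg : Continuous g) (a b : ℝ) :
    IntervalIntegrable (fun x => log (sin (π * x)) * g x) volume a b := by
  have := (intervalIntegrable_log_sin (a := π * a) (b := π * b)).comp_mul_left (c := π)
  simp only [mul_div_cancel_left₀ _ pi_ne_zero, Function.comp_def] at this
  exact this.mul_continuousOn hg.continuousOn

/-- `(2n+1)π` times a primitive of `log (sin (πx)) * sin ((2n+1)πx)` on `(0, 1)`. -/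
noncomputable def logSinPrimitive (n : ℕ) (x : ℝ) : ℝ :=
  (1 - cos ((2 * n + 1) * π * x)) * log (sin (π * x)) - log (1 + cos (π * x))
    + cos ((2 * n + 1) * π * x) / (2 * n + 1)
    + 2 * ∑ j ∈ Icc 1 n, cos ((2 * j - 1) * π * x) / (2 * j - 1)

lemma hasDerivAt_cos_mul_pi_div {a : ℝ} (ha : a ≠ 0) (x : ℝ) :
    HasDerivAt (fun x => cos (a * π * x) / a) (-(π * sin (a * π * x))) x := by
  refine (((hasDerivAt_id x).const_mul (a * π)).cos.div_const a).congr_deriv ?_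
  simp only [id, mul_one]
  field_simp

lemma hasDerivAt_logSinPrimitive (n : ℕ) {x : ℝ} (hx0 : 0 < x) (hx1 : x < 1) :
    HasDerivAt (logSinPrimitive n)
      ((2 * n + 1) * π * (log (sin (π * x)) * sin ((2 * n + 1) * π * x))) x := by
  have hsin : 0 < sin (π * x) := sin_pos_of_pos_of_lt_pi (by positivity) (by nlinarith [pi_pos])
  have hcos : 0 < 1 + cos (π * x) := by
    have := cos_lt_cos_of_nonneg_of_le_pi (y := π) (x := π * x) (by positivity) le_rfl
      (by nlinarith [pi_pos])
    rw [cos_pi] at this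
    linarith
  have hodd : ∀ j ∈ Icc 1 n, (2 * (j : ℝ) - 1) ≠ 0 := fun j hj => by
    have : (1 : ℝ) ≤ j := by exact_mod_cast (mem_Icc.1 hj).1
    linarith
  have hpix : HasDerivAt (fun x => π * x) π x := by
    simpa using (hasDerivAt_id x).const_mul π
  have hcx : HasDerivAt (fun x => (2 * n + 1) * π * x) ((2 * n + 1) * π) x := by
    simpa using (hasDerivAt_id x).const_mul ((2 * n + 1) * π)
  have hsum := HasDerivAt.fun_sum (u := Icc 1 n) fun j hj =>
    hasDerivAt_cos_mul_pi_div (hodd j hj) x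
  have hderiv : HasDerivAt (logSinPrimitive n) _ x :=
    (((hcx.cos.const_sub 1).mul (hpix.sin.log hsin.ne')).sub
      ((hpix.cos.const_add 1).log hcos.ne')).add
      (hasDerivAt_cos_mul_pi_div (a := 2 * n + 1) (by positivity) x) |>.add (hsum.const_mul 2)
  convert hderiv using 1
  have key := one_sub_cos_odd_mul_mul_cot_add_sin_div_one_add_cos n hsin.ne' hcos.ne'
  simp only [← mul_assoc] at key
  simp only [sum_neg_distrib, ← mul_sum]
  linear_combination (-π) * key

lemma tendsto_logSinPrimitive_zero (n : ℕ) :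
    Tendsto (logSinPrimitive n) (𝓝[>] 0)
      (𝓝 (-log 2 + 1 / (2 * n + 1) + 2 * ∑ j ∈ Icc 1 n, 1 / (2 * (j : ℝ) - 1))) := by
  have hrest : ContinuousAt (fun x => -log (1 + cos (π * x))
      + cos ((2 * n + 1) * π * x) / (2 * n + 1)
      + 2 * ∑ j ∈ Icc 1 n, cos ((2 * j - 1) * π * x) / (2 * j - 1)) 0 := by
    fun_prop (disch := norm_num)
  convert (tendsto_one_sub_cos_mul_log_sin_pi_mul ((2 * n + 1) * π)).add
    (hrest.tendsto.mono_left nhdsWithin_le_nhds) using 1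
  · ext x
    unfold logSinPrimitive
    ring
  · norm_num

lemma cos_odd_mul_pi_mul_half (k : ℤ) : cos ((2 * k + 1) * π * (1 / 2)) = 0 :=
  cos_eq_zero_iff.2 ⟨k, by ring⟩

lemma logSinPrimitive_half (n : ℕ) : logSinPrimitive n (1 / 2) = 0 := by
  have hn := cos_odd_mul_pi_mul_half n
  have hsum : ∀ j ∈ Icc 1 n, cos ((2 * (j : ℝ) - 1) * π * (1 / 2)) / (2 * j - 1) = 0 :=
      fun j _ => by
    have := cos_odd_mul_pi_mul_half (j - 1)
    rw [Int.cast_sub, Int.cast_natCast, Int.cast_one,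
      show 2 * ((j : ℝ) - 1) + 1 = 2 * j - 1 by ring] at this
    rw [this, zero_div]
  push_cast at hn
  rw [logSinPrimitive, hn, sum_eq_zero hsum, mul_one_div, sin_pi_div_two, cos_pi_div_two]
  norm_num

lemma integral_log_sin_pi_mul_mul_sin_odd_half (n : ℕ) :
    ∫ x in 0..1 / 2, log (sin (π * x)) * sin ((2 * n + 1) * π * x) =
      (log 2 - 1 / (2 * n + 1) - 2 * ∑ j ∈ Icc 1 n, 1 / (2 * (j : ℝ) - 1)) / ((2 * n + 1) * π) := by
  have hftc := integral_eq_sub_of_hasDerivAt_of_tendsto (a := 0) (b := 1 / 2) (by norm_num)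
    (fun x hx => hasDerivAt_logSinPrimitive n hx.1 (by linarith [hx.2]))
    ((intervalIntegrable_log_sin_pi_mul_mul _ (by fun_prop) _ _).const_mul _)
    (tendsto_logSinPrimitive_zero n)
    ((hasDerivAt_logSinPrimitive n (by norm_num) (by norm_num)).continuousAt.tendsto.mono_left
      nhdsWithin_le_nhds)
  rw [integral_const_mul, logSinPrimitive_half] at hftc
  rw [eq_div_iff (by positivity), mul_comm, hftc]
  ring

lemma integral_log_sin_pi_mul_mul_sin_odd (n : ℕ) :
    ∫ x in 0..1, log (sin (π * x)) * sin ((2 * n + 1) * π * x) =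
      2 * (log 2 - 1 / (2 * n + 1) - 2 * ∑ j ∈ Icc 1 n, 1 / (2 * (j : ℝ) - 1)) /
        ((2 * n + 1) * π) := by
  have hreflect (x : ℝ) : log (sin (π * (1 - x))) * sin ((2 * n + 1) * π * (1 - x)) =
      log (sin (π * x)) * sin ((2 * n + 1) * π * x) := by
    rw [mul_one_sub, sin_pi_sub, sin_odd_mul_pi_mul_one_sub]
  rw [integral_eq_two_mul_integral_half_of_reflect hreflect
    (intervalIntegrable_log_sin_pi_mul_mul _ (by fun_prop) _ _),
    integral_log_sin_pi_mul_mul_sin_odd_half, mul_div_assoc]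

lemma intervalIntegrable_log_Gamma {a b : ℝ} (ha : 0 ≤ a) (hb : 0 ≤ b) :
    IntervalIntegrable (fun x => log (Gamma x)) volume a b := by
  have hcont : ContinuousOn (fun x => log (Gamma (x + 1))) (Set.uIcc a b) := by
    intro x hx
    have hx0 : 0 ≤ x := le_trans (le_min ha hb) hx.1
    refine ContinuousAt.continuousWithinAt
      (ContinuousAt.log ?_ (Gamma_pos_of_pos (by linarith)).ne')
    refine (differentiableAt_Gamma fun m => ?_).continuousAt.comp (by fun_prop)
    have : (0 : ℝ) ≤ m := m.cast_nonneg
    linarith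
  refine (intervalIntegrable_congr fun x hx => ?_).1
    (hcont.intervalIntegrable.sub (intervalIntegrable_log' (a := a) (b := b)))
  have hx0 : 0 < x := lt_of_le_of_lt (le_min ha hb) hx.1
  rw [Gamma_add_one hx0.ne', log_mul hx0.ne' (Gamma_pos_of_pos hx0).ne', add_sub_cancel_left]

lemma log_Gamma_add_log_Gamma_one_sub {x : ℝ} (hx : sin (π * x) ≠ 0) :
    log (Gamma x) + log (Gamma (1 - x)) = log π - log (sin (π * x)) := by
  have hrefl := Gamma_mul_Gamma_one_sub x
  have hne : Gamma x * Gamma (1 - x) ≠ 0 := by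
    rw [hrefl]
    exact div_ne_zero pi_ne_zero hx
  rw [← log_mul (left_ne_zero_of_mul hne) (right_ne_zero_of_mul hne), hrefl,
    log_div pi_ne_zero hx]

/- At the integers, where `Gamma` has its poles (and the junk value `0`), both sides vanish
because of the factor `sin ((2n+1)πx)`. -/
lemma log_Gamma_add_log_Gamma_one_sub_mul_sin_odd (n : ℕ) (x : ℝ) :
    (log (Gamma x) + log (Gamma (1 - x))) * sin ((2 * n + 1) * π * x) =
      (log π - log (sin (π * x))) * sin ((2 * n + 1) * π * x) := by
  by_cases hx : sin (π * x) = 0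
  · have := sin_nat_mul_eq_zero_of_sin_eq_zero hx (2 * n + 1)
    push_cast at this
    rw [mul_assoc, this, mul_zero, mul_zero]
  · rw [log_Gamma_add_log_Gamma_one_sub hx]

lemma integral_sin_odd_mul_pi (n : ℕ) :
    ∫ x in 0..1, sin ((2 * n + 1) * π * x) = 2 / ((2 * n + 1) * π) := by
  have hcos : cos ((2 * n + 1) * π) = -1 := by
    rw [show (2 * n + 1) * π = n * (2 * π) + π by ring, cos_nat_mul_two_pi_add_pi]
  rw [integral_comp_mul_left (fun x => sin x) (by positivity), integral_sin, mul_zero, mul_one,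
    cos_zero, hcos, smul_eq_mul]
  ring

theorem stmt_14 (n : ℕ) :
    ∫ x in (0:ℝ)..1, Real.log (Real.Gamma x) * Real.sin ((2 * (n : ℝ) + 1) * Real.pi * x) =
      (1 / ((2 * (n : ℝ) + 1) * Real.pi)) *
        (Real.log (Real.pi / 2) + 1 / (2 * (n : ℝ) + 1) +
          2 * ∑ k ∈ Finset.Icc 1 n, (1 : ℝ) / (2 * (k : ℝ) - 1)) := by
  have key := two_mul_integral_mul_eq_integral_add_reflect
    (s := fun x => sin ((2 * n + 1) * π * x)) (sin_odd_mul_pi_mul_one_sub n)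
    ((intervalIntegrable_log_Gamma le_rfl zero_le_one).mul_continuousOn (by fun_prop))
  simp only [log_Gamma_add_log_Gamma_one_sub_mul_sin_odd, sub_mul] at key
  rw [integral_sub (Continuous.intervalIntegrable (by fun_prop) _ _)
      (intervalIntegrable_log_sin_pi_mul_mul _ (by fun_prop) _ _),
    integral_const_mul, integral_sin_odd_mul_pi, integral_log_sin_pi_mul_mul_sin_odd] at key
  rw [log_div pi_ne_zero two_ne_zero]
  linear_combination key / 2
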